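/- arXiv:1712.04903 — 3 statements merged into one kernel-verified Lean document; each statement's English description precedes it below -/
import Mathlib

section
/- Let (I_n : A_n → ℝ)_{n ≥ 1} be a sequence of functions satisfying the symmetry property. Then I satisfies the full chain rule if and only if it satisfies the recursivity equation: I((p w_1, (1−p) w_1, w_2,…,w_n) ‖ (p̃ w̃_1, (1−p̃) w̃_1, w̃_2,…,w̃_n)) = I_n(w‖w̃) + w_1 · I_2((p,1−p)‖(p̃,1−p̃)) for all n ≥ 1, (w,w̃) ∈ A_n, and ((p,1−p),(p̃,1−p̃)) ∈ A_2. -/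
set_option maxHeartbeats 1000000


open Finset MeasureTheory

/-- `p` is a probability distribution on `{1, …, n}` (i.e. `p ∈ Δₙ`). -/
def IsDist {n : ℕ} (p : Fin n → ℝ) : Prop :=
  (∀ i, 0 ≤ p i) ∧ ∑ i, p i = 1

/-- `(p, r) ∈ Aₙ`: both are distributions and `p` is absolutely continuous
with respect to `r`. -/
def RelPair {n : ℕ} (p r : Fin n → ℝ) : Prop :=
  IsDist p ∧ IsDist r ∧ ∀ i, r i = 0 → p i = 0

/-- Decomposition of a sigma type over `Fin (n + 1)`. -/
def sigmaFinSuccEquiv {n : ℕ} (k : Fin (n + 1) → ℕ) :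
    (Σ i : Fin (n + 1), Fin (k i)) ≃ (Fin (k 0) ⊕ Σ i : Fin n, Fin (k i.succ)) where
  toFun x :=
    Fin.cases (motive := fun i => Fin (k i) → Fin (k 0) ⊕ Σ i : Fin n, Fin (k i.succ))
      (fun j => Sum.inl j) (fun i j => Sum.inr ⟨i, j⟩) x.1 x.2
  invFun y := y.elim (fun j => ⟨0, j⟩) fun x => ⟨x.1.succ, x.2⟩
  left_inv := by rintro ⟨i, j⟩; induction i using Fin.cases <;> rfl
  right_inv := by rintro (j | ⟨i, j⟩) <;> rfl

/-- The lexicographic equivalence `(Σ i : Fin n, Fin (k i)) ≃ Fin (k 1 + ⋯ + k n)`,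
sending `(i, j)` to `k 1 + ⋯ + k (i - 1) + j`. -/
def finSigmaEquiv : ∀ {n : ℕ} (k : Fin n → ℕ), (Σ i : Fin n, Fin (k i)) ≃ Fin (∑ i, k i)
  | 0, _ => (Equiv.equivOfIsEmpty _ (Fin 0)).trans (finCongr (by simp))
  | n + 1, k =>
      (sigmaFinSuccEquiv k).trans <|
        ((Equiv.refl (Fin (k 0))).sumCongr (finSigmaEquiv fun i => k i.succ)).trans <|
          finSumFinEquiv.trans (finCongr (Fin.sum_univ_succ k).symm)

/-- The composite distribution
`w ∘ (p¹, …, pⁿ) = (w₁p¹₁, …, w₁p¹_{k₁}, …, wₙpⁿ₁, …, wₙpⁿ_{kₙ}) ∈ Δ_{k₁+⋯+kₙ}`. -/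
def comp {n : ℕ} (k : Fin n → ℕ) (w : Fin n → ℝ)
    (p : ∀ i, Fin (k i) → ℝ) : Fin (∑ i, k i) → ℝ :=
  fun j => w ((finSigmaEquiv k).symm j).1 * p _ ((finSigmaEquiv k).symm j).2

/-- Symmetry: `I(p ‖ r) = I(pσ ‖ rσ)` for every permutation `σ`,
where `(pσ)ᵢ = p_{σ(i)}`. -/
def SymmRel (I : ∀ n : ℕ, (Fin n → ℝ) → (Fin n → ℝ) → ℝ) : Prop :=
  ∀ (n : ℕ) (p r : Fin n → ℝ) (σ : Equiv.Perm (Fin n)),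
    RelPair p r → I n p r = I n (p ∘ σ) (r ∘ σ)

/-- The chain rule:
`I(w∘(p¹,…,pⁿ) ‖ w̃∘(p̃¹,…,p̃ⁿ)) = I(w ‖ w̃) + ∑ᵢ wᵢ I(pⁱ ‖ p̃ⁱ)`. -/
def ChainRule (I : ∀ n : ℕ, (Fin n → ℝ) → (Fin n → ℝ) → ℝ) : Prop :=
  ∀ (n : ℕ) (k : Fin n → ℕ) (w w' : Fin n → ℝ) (p p' : ∀ i, Fin (k i) → ℝ),
    RelPair w w' → (∀ i, RelPair (p i) (p' i)) →
    I (∑ i, k i) (comp k w p) (comp k w' p') =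
      I n w w' + ∑ i, w i * I (k i) (p i) (p' i)

/-- Recursivity: the special case `k₁ = 2, k₂ = ⋯ = kₙ = 1` of the chain rule. -/
def Recursivity (I : ∀ n : ℕ, (Fin n → ℝ) → (Fin n → ℝ) → ℝ) : Prop :=
  ∀ (n : ℕ) (w w' : Fin (n + 1) → ℝ) (p p' : ℝ),
    RelPair w w' → RelPair ![p, 1 - p] ![p', 1 - p'] →
    I (n + 2) (Fin.cons (p * w 0) (Fin.cons ((1 - p) * w 0) fun i => w i.succ))
        (Fin.cons (p' * w' 0) (Fin.cons ((1 - p') * w' 0) fun i => w' i.succ)) =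
      I (n + 1) w w' + w 0 * I 2 ![p, 1 - p] ![p', 1 - p']

lemma feq {A : ℕ} (f : Fin A → ℝ) {i j : Fin A} (h : (i:ℕ) = (j:ℕ)) : f i = f j :=
  congrArg f (Fin.ext h)

lemma append_apply {A B : ℕ} (u : Fin A → ℝ) (v : Fin B → ℝ) (j : Fin (A+B)) :
    Fin.append u v j = if h : (j:ℕ) < A then u ⟨j, h⟩
      else v ⟨(j:ℕ) - A, by have := j.isLt; omega⟩ := by
  rcases j with ⟨jv, hjv⟩
  split_ifs with h
  · have hj : (⟨jv, hjv⟩ : Fin (A+B)) = Fin.castAdd B ⟨jv, h⟩ := rfl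
    conv_lhs => rw [hj]
    rw [Fin.append_left]
  · have h' : ¬ jv < A := h
    have hj : (⟨jv, hjv⟩ : Fin (A+B)) = Fin.natAdd A ⟨jv - A, by omega⟩ :=
      Fin.ext (by simp only [Fin.coe_natAdd]; omega)
    conv_lhs => rw [hj]
    rw [Fin.append_right]

lemma cons_apply {n : ℕ} (x : ℝ) (t : Fin n → ℝ) (j : Fin (n+1)) :
    (Fin.cons x t : Fin (n+1) → ℝ) j = if h : (j:ℕ) = 0 then x
      else t ⟨(j:ℕ) - 1, by have := j.isLt; omega⟩ := by
  rcases j with ⟨jv, hj⟩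
  cases jv with
  | zero =>
      rw [dif_pos rfl]
      have h0 : (⟨0, hj⟩ : Fin (n+1)) = 0 := rfl
      rw [h0, Fin.cons_zero]
  | succ m =>
      rw [dif_neg (by simp)]
      have h1 : (⟨m+1, hj⟩ : Fin (n+1)) = Fin.succ ⟨m, by omega⟩ := rfl
      conv_lhs => rw [h1]
      rw [Fin.cons_succ]
      exact feq t rfl

lemma dist_fin_one {p : Fin 1 → ℝ} (h : IsDist p) (i : Fin 1) : p i = 1 := by
  obtain ⟨-, hs⟩ := h
  have hi : i = 0 := Subsingleton.elim _ _
  rw [hi]; simpa using hs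

lemma relPair_transfer {N N' : ℕ} (e : Fin N ≃ Fin N') {p r : Fin N → ℝ}
    {p' r' : Fin N' → ℝ} (hp : ∀ i, p i = p' (e i)) (hr : ∀ i, r i = r' (e i))
    (h : RelPair p r) : RelPair p' r' := by
  obtain ⟨⟨hp0, hp1⟩, ⟨hr0, hr1⟩, hac⟩ := h
  have hp' : ∀ i, p' i = p (e.symm i) := fun i => by rw [hp (e.symm i), e.apply_symm_apply]
  have hr' : ∀ i, r' i = r (e.symm i) := fun i => by rw [hr (e.symm i), e.apply_symm_apply]
  refine ⟨⟨fun i => (hp' i) ▸ hp0 _, ?_⟩, ⟨fun i => (hr' i) ▸ hr0 _, ?_⟩, fun i h0 => ?_⟩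
  · rw [← Fintype.sum_equiv e p p' hp]; exact hp1
  · rw [← Fintype.sum_equiv e r r' hr]; exact hr1
  · rw [hp' i]; exact hac _ (by rw [← hr' i]; exact h0)

lemma I_transfer {I : ∀ n : ℕ, (Fin n → ℝ) → (Fin n → ℝ) → ℝ} (hS : SymmRel I)
    {N N' : ℕ} (e : Fin N ≃ Fin N') {p r : Fin N → ℝ} {p' r' : Fin N' → ℝ}
    (h : RelPair p r) (hp : ∀ i, p i = p' (e i)) (hr : ∀ i, r i = r' (e i)) :
    I N p r = I N' p' r' := by
  obtain rfl : N = N' := Fin.equiv_iff_eq.mp ⟨e⟩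
  rw [hS N p r (e.symm : Equiv.Perm (Fin N)) h]
  congr 1 <;> funext i
  · show p (e.symm i) = p' i
    rw [hp (e.symm i), e.apply_symm_apply]
  · show r (e.symm i) = r' i
    rw [hr (e.symm i), e.apply_symm_apply]

def cycleE (M R : ℕ) : Fin ((M+R)+1) ≃ Fin (M+(R+1)) where
  toFun i := ⟨if (i:ℕ) = 0 then M else if (i:ℕ) ≤ M then (i:ℕ) - 1 else (i:ℕ),
    by have := i.isLt; split_ifs <;> omega⟩
  invFun j := ⟨if (j:ℕ) = M then 0 else if (j:ℕ) < M then (j:ℕ) + 1 else (j:ℕ),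
    by have := j.isLt; split_ifs <;> omega⟩
  left_inv i := by
    have := i.isLt
    apply Fin.ext
    dsimp only
    split_ifs <;> (try omega) <;> simp_all
  right_inv j := by
    have := j.isLt
    apply Fin.ext
    dsimp only
    split_ifs <;> (try omega) <;> simp_all

lemma cycleE_val (M R : ℕ) (i : Fin ((M+R)+1)) :
    ((cycleE M R i : Fin _) : ℕ)
      = if (i:ℕ) = 0 then M else if (i:ℕ) ≤ M then (i:ℕ) - 1 else (i:ℕ) := by
  dsimp [cycleE]

def swap2E (N : ℕ) : Fin (N+2) ≃ Fin (N+2) where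
  toFun i := ⟨if (i:ℕ) = 0 then 1 else if (i:ℕ) = 1 then 0 else (i:ℕ),
    by have := i.isLt; split_ifs <;> omega⟩
  invFun i := ⟨if (i:ℕ) = 0 then 1 else if (i:ℕ) = 1 then 0 else (i:ℕ),
    by have := i.isLt; split_ifs <;> omega⟩
  left_inv i := by
    have := i.isLt
    apply Fin.ext
    dsimp only
    split_ifs <;> (try omega) <;> simp_all
  right_inv i := by
    have := i.isLt
    apply Fin.ext
    dsimp only
    split_ifs <;> (try omega) <;> simp_all

lemma swap2E_val (N : ℕ) (i : Fin (N+2)) :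
    ((swap2E N i : Fin _) : ℕ)
      = if (i:ℕ) = 0 then 1 else if (i:ℕ) = 1 then 0 else (i:ℕ) := by
  dsimp [swap2E]

lemma finSigmaEquiv_zero_val {n : ℕ} (k : Fin (n+1) → ℕ) (b : Fin (k 0)) :
    ((finSigmaEquiv k ⟨0, b⟩ : Fin _) : ℕ) = (b:ℕ) := by
  simp [finSigmaEquiv, sigmaFinSuccEquiv]

lemma finSigmaEquiv_succ_val {n : ℕ} (k : Fin (n+1) → ℕ) (i : Fin n) (b : Fin (k i.succ)) :
    ((finSigmaEquiv k ⟨i.succ, b⟩ : Fin _) : ℕ)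
      = k 0 + ((finSigmaEquiv (fun t => k t.succ) ⟨i, b⟩ : Fin _) : ℕ) := by
  simp [finSigmaEquiv, sigmaFinSuccEquiv]

lemma comp_eval {n : ℕ} (k : Fin n → ℕ) (w : Fin n → ℝ) (p : ∀ i, Fin (k i) → ℝ)
    (j : Fin (∑ i, k i)) (x : Σ i, Fin (k i))
    (h : (j:ℕ) = ((finSigmaEquiv k x : Fin _) : ℕ)) :
    comp k w p j = w x.1 * p x.1 x.2 := by
  have hj : j = finSigmaEquiv k x := Fin.ext h
  subst hj
  show w _ * p _ _ = _
  rw [Equiv.symm_apply_apply]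

lemma sum_comp {n : ℕ} (k : Fin n → ℕ) (w : Fin n → ℝ) (p : ∀ i, Fin (k i) → ℝ)
    (hp : ∀ i, ∑ l, p i l = 1) : ∑ j, comp k w p j = ∑ i, w i := by
  rw [← Fintype.sum_equiv (finSigmaEquiv k) (fun x => w x.1 * p x.1 x.2) (comp k w p)
      (fun x => (comp_eval k w p _ x rfl).symm)]
  rw [← Finset.univ_sigma_univ, Finset.sum_sigma]
  simp_rw [← Finset.mul_sum, hp, mul_one]

lemma comp_nonneg {n : ℕ} {k : Fin n → ℕ} {w : Fin n → ℝ} {p : ∀ i, Fin (k i) → ℝ}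
    (hw : ∀ i, 0 ≤ w i) (hp : ∀ i l, 0 ≤ p i l) (j : Fin (∑ i, k i)) :
    0 ≤ comp k w p j :=
  mul_nonneg (hw _) (hp _ _)

lemma comp_ac {n : ℕ} {k : Fin n → ℕ} {w w' : Fin n → ℝ} {p p' : ∀ i, Fin (k i) → ℝ}
    (hw : ∀ i, w' i = 0 → w i = 0) (hp : ∀ i l, p' i l = 0 → p i l = 0)
    (j : Fin (∑ i, k i)) (h : comp k w' p' j = 0) : comp k w p j = 0 := by
  unfold comp at h ⊢
  rcases mul_eq_zero.mp h with h1 | h1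
  · rw [hw _ h1, zero_mul]
  · rw [hp _ _ h1, mul_zero]

lemma relPair_append {A B : ℕ} {f f' : Fin A → ℝ} {g g' : Fin B → ℝ}
    (hf0 : ∀ i, 0 ≤ f i) (hg0 : ∀ i, 0 ≤ g i) (hf0' : ∀ i, 0 ≤ f' i) (hg0' : ∀ i, 0 ≤ g' i)
    (hsum : ∑ i, f i + ∑ i, g i = 1) (hsum' : ∑ i, f' i + ∑ i, g' i = 1)
    (hacf : ∀ i, f' i = 0 → f i = 0) (hacg : ∀ i, g' i = 0 → g i = 0) :
    RelPair (Fin.append f g) (Fin.append f' g') := by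
  refine ⟨⟨?_, ?_⟩, ⟨?_, ?_⟩, ?_⟩
  · intro i; rw [append_apply]; split_ifs; exacts [hf0 _, hg0 _]
  · rw [Fin.sum_univ_add]; simpa [Fin.append_left, Fin.append_right] using hsum
  · intro i; rw [append_apply]; split_ifs; exacts [hf0' _, hg0' _]
  · rw [Fin.sum_univ_add]; simpa [Fin.append_left, Fin.append_right] using hsum'
  · intro i h
    rw [append_apply] at h ⊢
    split_ifs at h ⊢ with hc
    · exact hacf _ h
    · exact hacg _ h

lemma relPair_cons {n : ℕ} {a a' : ℝ} {t t' : Fin n → ℝ}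
    (ha : 0 ≤ a) (ha' : 0 ≤ a') (ht : ∀ i, 0 ≤ t i) (ht' : ∀ i, 0 ≤ t' i)
    (hsum : a + ∑ i, t i = 1) (hsum' : a' + ∑ i, t' i = 1)
    (hac0 : a' = 0 → a = 0) (hact : ∀ i, t' i = 0 → t i = 0) :
    RelPair (Fin.cons a t) (Fin.cons a' t') := by
  refine ⟨⟨?_, ?_⟩, ⟨?_, ?_⟩, ?_⟩
  · intro i
    induction i using Fin.cases with
    | zero => simpa using ha
    | succ j => simpa using ht j
  · rw [Fin.sum_univ_succ]; simpa using hsum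
  · intro i
    induction i using Fin.cases with
    | zero => simpa using ha'
    | succ j => simpa using ht' j
  · rw [Fin.sum_univ_succ]; simpa using hsum'
  · intro i
    induction i using Fin.cases with
    | zero => simpa using hac0
    | succ j => simpa using hact j

lemma append_left_val {A B : ℕ} (u : Fin A → ℝ) (v : Fin B → ℝ) (j : Fin (A+B))
    (h : (j:ℕ) < A) : Fin.append u v j = u ⟨j, h⟩ := by
  rw [append_apply, dif_pos h]

lemma append_right_val {A B : ℕ} (u : Fin A → ℝ) (v : Fin B → ℝ) (j : Fin (A+B))
    (h : ¬ (j:ℕ) < A) : Fin.append u v j = v ⟨(j:ℕ) - A, by have := j.isLt; omega⟩ := by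
  rw [append_apply, dif_neg h]

lemma cons_zero_val {n : ℕ} (x : ℝ) (t : Fin n → ℝ) (j : Fin (n+1)) (h : (j:ℕ) = 0) :
    (Fin.cons x t : Fin (n+1) → ℝ) j = x := by
  rw [cons_apply, dif_pos h]

lemma cons_succ_val {n : ℕ} (x : ℝ) (t : Fin n → ℝ) (j : Fin (n+1)) (h : ¬ (j:ℕ) = 0) :
    (Fin.cons x t : Fin (n+1) → ℝ) j = t ⟨(j:ℕ) - 1, by have := j.isLt; omega⟩ := by
  rw [cons_apply, dif_neg h]

lemma cons2_apply {n : ℕ} (a b : ℝ) (t : Fin n → ℝ) (j : Fin (n+2)) :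
    (Fin.cons a (Fin.cons b t) : Fin (n+2) → ℝ) j
      = if h1 : (j:ℕ) = 0 then a
        else if h2 : (j:ℕ) = 1 then b
        else t ⟨(j:ℕ) - 2, by have := j.isLt; omega⟩ := by
  by_cases h1 : (j:ℕ) = 0
  · rw [cons_zero_val _ _ _ h1, dif_pos h1]
  · rw [cons_succ_val _ _ _ h1, dif_neg h1]
    by_cases h2 : (j:ℕ) = 1
    · rw [cons_zero_val _ _ _ (show (j:ℕ) - 1 = 0 by omega), dif_pos h2]
    · rw [cons_succ_val _ _ _ (show ¬ (j:ℕ) - 1 = 0 by omega), dif_neg h2]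
      exact feq t (show (j:ℕ) - 1 - 1 = (j:ℕ) - 2 by omega)

lemma relPair_Aform {m N : ℕ} {q q' : Fin m → ℝ} {u u' : Fin (N+1) → ℝ}
    (hq : RelPair q q') (hu : RelPair u u') :
    RelPair (Fin.append (fun j => u 0 * q j) (fun i => u i.succ))
            (Fin.append (fun j => u' 0 * q' j) (fun i => u' i.succ)) := by
  have h1 : ∑ j, (u 0 * q j) = u 0 := by rw [← Finset.mul_sum, hq.1.2, mul_one]
  have h1' : ∑ j, (u' 0 * q' j) = u' 0 := by rw [← Finset.mul_sum, hq.2.1.2, mul_one]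
  have h2 : u 0 + ∑ i : Fin N, u i.succ = 1 := by rw [← Fin.sum_univ_succ]; exact hu.1.2
  have h2' : u' 0 + ∑ i : Fin N, u' i.succ = 1 := by rw [← Fin.sum_univ_succ]; exact hu.2.1.2
  apply relPair_append
  · exact fun i => mul_nonneg (hu.1.1 0) (hq.1.1 i)
  · exact fun i => hu.1.1 i.succ
  · exact fun i => mul_nonneg (hu.2.1.1 0) (hq.2.1.1 i)
  · exact fun i => hu.2.1.1 i.succ
  · rw [h1]; exact h2
  · rw [h1']; exact h2'
  · intro i h
    rcases mul_eq_zero.mp h with h | h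
    · rw [hu.2.2 0 h, zero_mul]
    · rw [hq.2.2 i h, mul_zero]
  · exact fun i h => hu.2.2 i.succ h

lemma I1R {I : ∀ n : ℕ, (Fin n → ℝ) → (Fin n → ℝ) → ℝ} (hS : SymmRel I)
    (hR : Recursivity I) {p r : Fin 1 → ℝ} (h : RelPair p r) : I 1 p r = 0 := by
  have hp1 := dist_fin_one h.1
  have hr1 := dist_fin_one h.2.1
  have h2 : RelPair ![(1:ℝ), 1-1] ![(1:ℝ), 1-1] := by
    refine ⟨⟨?_, ?_⟩, ⟨?_, ?_⟩, fun i hh => hh⟩ <;>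
      first
        | (intro i; fin_cases i <;> norm_num)
        | (rw [Fin.sum_univ_two]; norm_num)
  have key := hR 0 p r 1 1 h h2
  have hv : (Fin.cons (1 * p 0) (Fin.cons ((1-1) * p 0) (fun i : Fin 0 => p i.succ))
      : Fin 2 → ℝ) = ![(1:ℝ), 1-1] := by
    funext j
    rw [cons2_apply]
    split_ifs with hj1 hj2
    · rw [hp1 0, mul_one, show j = 0 from Fin.ext (by simpa using hj1)]
      norm_num
    · rw [show j = 1 from Fin.ext (by simpa using hj2)]
      norm_num
    · exact absurd (j.isLt) (by omega)
  have hv' : (Fin.cons (1 * r 0) (Fin.cons ((1-1) * r 0) (fun i : Fin 0 => r i.succ))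
      : Fin 2 → ℝ) = ![(1:ℝ), 1-1] := by
    funext j
    rw [cons2_apply]
    split_ifs with hj1 hj2
    · rw [hr1 0, mul_one, show j = 0 from Fin.ext (by simpa using hj1)]
      norm_num
    · rw [show j = 1 from Fin.ext (by simpa using hj2)]
      norm_num
    · exact absurd (j.isLt) (by omega)
  rw [hv, hv', hp1 0] at key
  linarith

lemma lemA {I : ∀ n : ℕ, (Fin n → ℝ) → (Fin n → ℝ) → ℝ} (hS : SymmRel I) (hR : Recursivity I) :
    ∀ (m N : ℕ) (q q' : Fin m → ℝ) (u u' : Fin (N+1) → ℝ), RelPair q q' → RelPair u u' →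
      I (m + N) (Fin.append (fun j => u 0 * q j) (fun i => u i.succ))
                (Fin.append (fun j => u' 0 * q' j) (fun i => u' i.succ))
        = I (N+1) u u' + u 0 * I m q q' := by
  intro m
  induction m with
  | zero =>
      intro N q q' u u' hq hu
      exact absurd hq.1.2 (by simp)
  | succ m IH =>
      rcases m with _ | m
      · -- block size 1
        intro N q q' u u' hq hu
        rw [I1R hS hR hq, mul_zero, add_zero]
        refine I_transfer hS (finCongr (show 1 + N = N + 1 by omega)) (relPair_Aform hq hu) ?_ ?_
        · intro i
          rw [append_apply]
          split_ifs with hc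
          · rw [dist_fin_one hq.1, mul_one]
            exact feq u (by simp [Fin.coe_cast]; omega)
          · exact feq u (by simp [Fin.coe_cast]; omega)
        · intro i
          rw [append_apply]
          split_ifs with hc
          · rw [dist_fin_one hq.2.1, mul_one]
            exact feq u' (by simp [Fin.coe_cast]; omega)
          · exact feq u' (by simp [Fin.coe_cast]; omega)
      · -- block size m + 2
        intro N q q' u u' hq hu
        have hq0 := hq.1.1
        have hq0' := hq.2.1.1
        have hqac := hq.2.2
        have hu0 := hu.1.1
        have hu0' := hu.2.1.1
        have huac := hu.2.2
        have hqs : q 0 + ∑ j : Fin (m+1), q j.succ = 1 := by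
          rw [← Fin.sum_univ_succ]; exact hq.1.2
        have hqs' : q' 0 + ∑ j : Fin (m+1), q' j.succ = 1 := by
          rw [← Fin.sum_univ_succ]; exact hq.2.1.2
        have husum : u 0 + ∑ i : Fin N, u i.succ = 1 := by
          rw [← Fin.sum_univ_succ]; exact hu.1.2
        have husum' : u' 0 + ∑ i : Fin N, u' i.succ = 1 := by
          rw [← Fin.sum_univ_succ]; exact hu.2.1.2
        set s : ℝ := 1 - q 0 with hs_def
        set s' : ℝ := 1 - q' 0 with hs'_def
        have hssum : ∑ j : Fin (m+1), q j.succ = s := by rw [hs_def]; linarith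
        have hs'sum : ∑ j : Fin (m+1), q' j.succ = s' := by rw [hs'_def]; linarith
        have hs0 : 0 ≤ s := by rw [← hssum]; exact Finset.sum_nonneg fun j _ => hq0 _
        have hs0' : 0 ≤ s' := by rw [← hs'sum]; exact Finset.sum_nonneg fun j _ => hq0' _
        have hz : s = 0 → ∀ j : Fin (m+1), q j.succ = 0 := by
          intro h j
          have h2 := (Finset.sum_eq_zero_iff_of_nonneg
            (fun j _ => hq0 j.succ)).mp (hssum.trans h)
          exact h2 j (Finset.mem_univ j)
        have hz' : s' = 0 → ∀ j : Fin (m+1), q' j.succ = 0 := by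
          intro h j
          have h2 := (Finset.sum_eq_zero_iff_of_nonneg
            (fun j _ => hq0' j.succ)).mp (hs'sum.trans h)
          exact h2 j (Finset.mem_univ j)
        have hss' : s' = 0 → s = 0 := by
          intro h
          rw [← hssum]
          exact Finset.sum_eq_zero fun j _ => hqac _ (hz' h j)
        set Q' : Fin (m+1) → ℝ :=
          fun j => if s' = 0 then (if j = 0 then 1 else 0) else q' j.succ / s' with hQ'def
        set Q : Fin (m+1) → ℝ := fun j => if s = 0 then Q' j else q j.succ / s with hQdef
        have hQ'mul : ∀ j, s' * Q' j = q' j.succ := by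
          intro j
          by_cases h : s' = 0
          · rw [h, zero_mul, hz' h j]
          · simp only [hQ'def, if_neg h]
            field_simp
        have hQmul : ∀ j, s * Q j = q j.succ := by
          intro j
          by_cases h : s = 0
          · rw [h, zero_mul, hz h j]
          · simp only [hQdef, if_neg h]
            field_simp
        have hQ'0 : ∀ j, 0 ≤ Q' j := by
          intro j
          simp only [hQ'def]
          split_ifs
          · norm_num
          · norm_num
          · exact div_nonneg (hq0' _) hs0'
        have hQ0 : ∀ j, 0 ≤ Q j := by
          intro j
          simp only [hQdef]
          split_ifs with h
          · exact hQ'0 j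
          · exact div_nonneg (hq0 _) hs0
        have hQ'sum : ∑ j, Q' j = 1 := by
          simp only [hQ'def]
          by_cases h : s' = 0
          · simp only [if_pos h]
            simp
          · simp only [if_neg h]
            rw [← Finset.sum_div, hs'sum, div_self h]
        have hQsum : ∑ j, Q j = 1 := by
          simp only [hQdef]
          by_cases h : s = 0
          · simp only [if_pos h]
            exact hQ'sum
          · simp only [if_neg h]
            rw [← Finset.sum_div, hssum, div_self h]
        have hQac : ∀ j, Q' j = 0 → Q j = 0 := by
          intro j h0
          simp only [hQdef]
          by_cases h : s = 0
          · rw [if_pos h]; exact h0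
          · rw [if_neg h]
            have hs'n : s' ≠ 0 := fun hc => h (hss' hc)
            simp only [hQ'def, if_neg hs'n] at h0
            rcases div_eq_zero_iff.mp h0 with h1 | h1
            · rw [hqac _ h1, zero_div]
            · exact absurd h1 hs'n
        have hQpair : RelPair Q Q' := ⟨⟨hQ0, hQsum⟩, ⟨hQ'0, hQ'sum⟩, hQac⟩
        set uB : Fin (N+1+1) → ℝ :=
          Fin.cons (s * u 0) (Fin.cons (q 0 * u 0) (fun i => u i.succ)) with huBdef
        set uB' : Fin (N+1+1) → ℝ :=
          Fin.cons (s' * u' 0) (Fin.cons (q' 0 * u' 0) (fun i => u' i.succ)) with huB'def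
        have huBval : ∀ j : Fin (N+1+1), uB j
            = if h1 : (j:ℕ) = 0 then s * u 0 else if h2 : (j:ℕ) = 1 then q 0 * u 0
              else u ⟨(j:ℕ)-1, by have := j.isLt; omega⟩ := by
          intro j
          simp only [huBdef]
          rw [cons2_apply]
          split_ifs with h1 h2
          · rfl
          · rfl
          · exact feq u (show (j:ℕ) - 2 + 1 = (j:ℕ) - 1 by omega)
        have huB'val : ∀ j : Fin (N+1+1), uB' j
            = if h1 : (j:ℕ) = 0 then s' * u' 0 else if h2 : (j:ℕ) = 1 then q' 0 * u' 0
              else u' ⟨(j:ℕ)-1, by have := j.isLt; omega⟩ := by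
          intro j
          simp only [huB'def]
          rw [cons2_apply]
          split_ifs with h1 h2
          · rfl
          · rfl
          · exact feq u' (show (j:ℕ) - 2 + 1 = (j:ℕ) - 1 by omega)
        have huBpair : RelPair uB uB' := by
          refine ⟨⟨?_, ?_⟩, ⟨?_, ?_⟩, ?_⟩
          · intro j
            rw [huBval j]
            split_ifs
            · exact mul_nonneg hs0 (hu0 0)
            · exact mul_nonneg (hq0 0) (hu0 0)
            · exact hu0 _
          · simp only [huBdef, Fin.sum_univ_succ, Fin.cons_zero, Fin.cons_succ]
            rw [hs_def]
            linear_combination husum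
          · intro j
            rw [huB'val j]
            split_ifs
            · exact mul_nonneg hs0' (hu0' 0)
            · exact mul_nonneg (hq0' 0) (hu0' 0)
            · exact hu0' _
          · simp only [huB'def, Fin.sum_univ_succ, Fin.cons_zero, Fin.cons_succ]
            rw [hs'_def]
            linear_combination husum'
          · intro j h0
            rw [huBval j]
            rw [huB'val j] at h0
            split_ifs at h0 ⊢ with h1 h2
            · rcases mul_eq_zero.mp h0 with h | h
              · rw [hss' h, zero_mul]
              · rw [huac 0 h, mul_zero]
            · rcases mul_eq_zero.mp h0 with h | h
              · rw [hqac 0 h, zero_mul]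
              · rw [huac 0 h, mul_zero]
            · exact huac _ h0
        set v : Fin 2 → ℝ := ![s, q 0] with hvdef
        set v' : Fin 2 → ℝ := ![s', q' 0] with hv'def
        have hvpair : RelPair v v' := by
          refine ⟨⟨?_, ?_⟩, ⟨?_, ?_⟩, ?_⟩
          · intro i
            fin_cases i
            · simpa [hvdef] using hs0
            · simpa [hvdef] using hq0 0
          · rw [Fin.sum_univ_two]
            simp only [hvdef, Matrix.cons_val_zero, Matrix.cons_val_one, Matrix.head_cons]
            rw [hs_def]; ring
          · intro i
            fin_cases i
            · simpa [hv'def] using hs0'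
            · simpa [hv'def] using hq0' 0
          · rw [Fin.sum_univ_two]
            simp only [hv'def, Matrix.cons_val_zero, Matrix.cons_val_one, Matrix.head_cons]
            rw [hs'_def]; ring
          · intro i h
            fin_cases i <;>
              simp only [hvdef, hv'def, Matrix.cons_val_zero, Matrix.cons_val_one,
                Matrix.head_cons, Fin.mk_zero, Fin.mk_one] at h ⊢
            · exact hss' h
            · exact hqac 0 h
        -- the transfer E1
        have hE1 : (m+1+1)+N = ((m+1)+N)+1 := by omega
        set E1 : Fin ((m+1+1)+N) ≃ Fin ((m+1)+(N+1)) :=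
          (finCongr hE1).trans (cycleE (m+1) N) with hE1def
        have hE1val : ∀ i : Fin ((m+1+1)+N), ((E1 i : Fin _) : ℕ)
            = if (i:ℕ) = 0 then (m+1) else if (i:ℕ) ≤ (m+1) then (i:ℕ) - 1 else (i:ℕ) := by
          intro i
          simp only [hE1def, Equiv.trans_apply, cycleE_val, finCongr_apply, Fin.coe_cast]
        have key1 : ∀ (σ : ℝ) (qq : Fin (m+1+1) → ℝ) (uu : Fin (N+1) → ℝ)
            (QQ : Fin (m+1) → ℝ), (∀ j, σ * QQ j = qq j.succ) →
            ∀ i, Fin.append (fun j => uu 0 * qq j) (fun t => uu t.succ) i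
              = Fin.append (fun j => (σ * uu 0) * QQ j)
                  (Fin.cons (qq 0 * uu 0) (fun t => uu t.succ) : Fin (N+1) → ℝ) (E1 i) := by
          intro σ qq uu QQ hmul i
          have hev := hE1val i
          have hiLt := i.isLt
          have heLt := (E1 i).isLt
          by_cases h0 : (i:ℕ) = 0
          · rw [if_pos h0] at hev
            rw [append_left_val _ _ _ (show (i:ℕ) < m+1+1 by omega),
                append_right_val _ _ _ (show ¬ ((E1 i : Fin _):ℕ) < m+1 by omega),
                cons_zero_val _ _ _ (show ((E1 i : Fin _):ℕ) - (m+1) = 0 by omega)]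
            have h3 : (⟨(i:ℕ), show (i:ℕ) < m+1+1 by omega⟩ : Fin (m+1+1)) = 0 :=
              Fin.ext (by simpa using h0)
            rw [h3]
            ring
          · by_cases h1 : (i:ℕ) ≤ m+1
            · rw [if_neg h0, if_pos h1] at hev
              rw [append_left_val _ _ _ (show (i:ℕ) < m+1+1 by omega),
                  append_left_val _ _ _ (show ((E1 i : Fin _):ℕ) < m+1 by omega)]
              have h3 : (⟨(i:ℕ), show (i:ℕ) < m+1+1 by omega⟩ : Fin (m+1+1))
                  = Fin.succ ⟨((E1 i : Fin _):ℕ), show ((E1 i : Fin _):ℕ) < m+1 by omega⟩ :=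
                Fin.ext (by simp [Fin.val_succ]; omega)
              rw [h3, ← hmul]
              ring
            · rw [if_neg h0, if_neg h1] at hev
              rw [append_right_val _ _ _ (show ¬ (i:ℕ) < m+1+1 by omega),
                  append_right_val _ _ _ (show ¬ ((E1 i : Fin _):ℕ) < m+1 by omega),
                  cons_succ_val _ _ _ (show ¬ ((E1 i : Fin _):ℕ) - (m+1) = 0 by omega)]
              exact feq uu (show (i:ℕ) - (m+1+1) + 1 = ((E1 i : Fin _):ℕ) - (m+1) - 1 + 1 by omega)
        have step1 : I ((m+1+1)+N)
            (Fin.append (fun j => u 0 * q j) (fun i => u i.succ))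
            (Fin.append (fun j => u' 0 * q' j) (fun i => u' i.succ))
            = I ((m+1)+(N+1))
              (Fin.append (fun j => uB 0 * Q j) (fun i => uB i.succ))
              (Fin.append (fun j => uB' 0 * Q' j) (fun i => uB' i.succ)) :=
          I_transfer hS E1 (relPair_Aform hq hu)
            (fun i => key1 s q u Q hQmul i) (fun i => key1 s' q' u' Q' hQ'mul i)
        have step2 := IH (N+1) Q Q' uB uB' hQpair huBpair
        -- swap transfer
        have key3 : ∀ (σ : ℝ) (qq0 : ℝ) (uu : Fin (N+1) → ℝ),
            ∀ i : Fin (N+1+1),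
              (Fin.cons (σ * uu 0) (Fin.cons (qq0 * uu 0) (fun t => uu t.succ))
                : Fin (N+1+1) → ℝ) i
              = (Fin.cons (qq0 * uu 0) (Fin.cons (σ * uu 0) (fun t => uu t.succ))
                : Fin (N+1+1) → ℝ) (swap2E N i) := by
          intro σ qq0 uu i
          have hv := swap2E_val N i
          have hiLt := i.isLt
          rw [cons2_apply, cons2_apply]
          by_cases h0 : (i:ℕ) = 0
          · rw [if_pos h0] at hv
            rw [dif_pos h0, dif_neg (show ¬ ((swap2E N i : Fin _):ℕ) = 0 by omega),
                dif_pos (show ((swap2E N i : Fin _):ℕ) = 1 by omega)]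
          · by_cases h1 : (i:ℕ) = 1
            · rw [if_neg h0, if_pos h1] at hv
              rw [dif_neg h0, dif_pos h1, dif_pos (show ((swap2E N i : Fin _):ℕ) = 0 by omega)]
            · rw [if_neg h0, if_neg h1] at hv
              rw [dif_neg h0, dif_neg h1,
                  dif_neg (show ¬ ((swap2E N i : Fin _):ℕ) = 0 by omega),
                  dif_neg (show ¬ ((swap2E N i : Fin _):ℕ) = 1 by omega)]
              exact feq uu (show (i:ℕ) - 2 + 1 = ((swap2E N i : Fin _):ℕ) - 2 + 1 by omega)
        have step3 : I (N+1+1) uB uB'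
            = I (N+1+1)
              (Fin.cons (q 0 * u 0) (Fin.cons (s * u 0) (fun i => u i.succ)))
              (Fin.cons (q' 0 * u' 0) (Fin.cons (s' * u' 0) (fun i => u' i.succ))) :=
          I_transfer hS (swap2E N) huBpair
            (fun i => by simp only [huBdef]; exact key3 s (q 0) u i)
            (fun i => by simp only [huB'def]; exact key3 s' (q' 0) u' i)
        have h2pair : RelPair ![q 0, 1 - q 0] ![q' 0, 1 - q' 0] := by
          refine ⟨⟨?_, ?_⟩, ⟨?_, ?_⟩, ?_⟩
          · intro i
            fin_cases i
            · simpa using hq0 0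
            · simpa using (show (0:ℝ) ≤ 1 - q 0 by linarith)
          · rw [Fin.sum_univ_two]
            simp only [Matrix.cons_val_zero, Matrix.cons_val_one, Matrix.head_cons]
            ring
          · intro i
            fin_cases i
            · simpa using hq0' 0
            · simpa using (show (0:ℝ) ≤ 1 - q' 0 by linarith)
          · rw [Fin.sum_univ_two]
            simp only [Matrix.cons_val_zero, Matrix.cons_val_one, Matrix.head_cons]
            ring
          · intro i h
            fin_cases i <;>
              simp only [Matrix.cons_val_zero, Matrix.cons_val_one, Matrix.head_cons,
                Fin.mk_zero, Fin.mk_one] at h ⊢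
            · exact hqac 0 h
            · have h2 : s' = 0 := by rw [hs'_def]; exact h
              rw [← hs_def]
              exact hss' h2
        have hRec := hR N u u' (q 0) (q' 0) hu h2pair
        -- gamma transfer
        have key4 : ∀ (σ : ℝ) (qq : Fin (m+1+1) → ℝ) (QQ : Fin (m+1) → ℝ)
            (vv : Fin 2 → ℝ), (∀ j, σ * QQ j = qq j.succ) → vv 0 = σ →
            (∀ t : Fin 1, vv t.succ = qq 0) →
            ∀ i : Fin (m+1+1), qq i
              = Fin.append (fun j => vv 0 * QQ j) (fun t => vv t.succ) ((cycleE (m+1) 0) i) := by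
          intro σ qq QQ vv hmul hv0 hv1 i
          have hev := cycleE_val (m+1) 0 i
          have hiLt := i.isLt
          by_cases h0 : (i:ℕ) = 0
          · rw [if_pos h0] at hev
            rw [append_right_val _ _ _ (show ¬ ((cycleE (m+1) 0 i : Fin _):ℕ) < m+1 by omega)]
            rw [hv1]
            exact feq qq (by simp [h0])
          · rw [if_neg h0, if_pos (show (i:ℕ) ≤ m+1 by omega)] at hev
            rw [append_left_val _ _ _ (show ((cycleE (m+1) 0 i : Fin _):ℕ) < m+1 by omega), hv0]
            have h3 : i = Fin.succ (⟨((cycleE (m+1) 0 i : Fin _):ℕ),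
                show ((cycleE (m+1) 0 i : Fin _):ℕ) < m+1 by omega⟩ : Fin (m+1)) :=
              Fin.ext (by simp [Fin.val_succ]; omega)
            conv_lhs => rw [h3]
            rw [← hmul]
        have hstep4 : I (m+1+1) q q'
            = I ((m+1)+(0+1))
              (Fin.append (fun j => v 0 * Q j) (fun t => v t.succ))
              (Fin.append (fun j => v' 0 * Q' j) (fun t => v' t.succ)) :=
          I_transfer hS (cycleE (m+1) 0) hq
            (fun i => key4 s q Q v hQmul (by simp [hvdef])
              (fun t => by rw [Subsingleton.elim t 0]; simp [hvdef]) i)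
            (fun i => key4 s' q' Q' v' hQ'mul (by simp [hv'def])
              (fun t => by rw [Subsingleton.elim t 0]; simp [hv'def]) i)
        have step4 : I (m+1+1) q q' = I (1+1) v v' + v 0 * I (m+1) Q Q' :=
          hstep4.trans (IH 1 Q Q' v v' hQpair hvpair)
        have step5 : I (1+1) v v' = I 2 ![q 0, 1 - q 0] ![q' 0, 1 - q' 0] := by
          refine I_transfer hS (swap2E 0) hvpair ?_ ?_
          · intro i
            fin_cases i <;> rfl
          · intro i
            fin_cases i <;> rfl
        have h5 : uB 0 = s * u 0 := rfl
        have h6 : v 0 = s := rfl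
        refine (step1.trans step2).trans ?_
        rw [step3.trans hRec, step4, step5, h5, h6]
        ring

lemma lemB {I : ∀ n : ℕ, (Fin n → ℝ) → (Fin n → ℝ) → ℝ} (hS : SymmRel I) (hR : Recursivity I) :
    ∀ (n N : ℕ) (k : Fin n → ℕ) (w w' : Fin n → ℝ) (p p' : ∀ i, Fin (k i) → ℝ)
      (u u' : Fin N → ℝ),
      (∀ i, RelPair (p i) (p' i)) →
      RelPair (Fin.append w u) (Fin.append w' u') →
      I ((∑ i, k i) + N) (Fin.append (comp k w p) u) (Fin.append (comp k w' p') u')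
        = I (n + N) (Fin.append w u) (Fin.append w' u') + ∑ i, w i * I (k i) (p i) (p' i) := by
  intro n
  induction n with
  | zero =>
      intro N k w w' p p' u u' hp hwu
      have hk : (∑ i : Fin 0, k i) = 0 := by simp
      have e1 : I ((∑ i, k i) + N) (Fin.append (comp k w p) u) (Fin.append (comp k w' p') u')
          = I (0 + N) (Fin.append w u) (Fin.append w' u') := by
        refine I_transfer hS (finCongr (by rw [hk])) ?_ ?_ ?_
        · refine relPair_transfer (finCongr (show 0 + N = (∑ i, k i) + N by rw [hk])) ?_ ?_ hwu
          · intro i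
            rw [append_right_val _ _ _ (show ¬ (i:ℕ) < 0 by omega),
                append_right_val _ _ _ (show ¬ ((finCongr (show 0 + N = (∑ i, k i) + N
                  by rw [hk]) i : Fin _):ℕ) < ∑ i, k i by simp only [finCongr_apply, Fin.coe_cast]; omega)]
            exact feq u (by simp only [finCongr_apply, Fin.coe_cast]; omega)
          · intro i
            rw [append_right_val _ _ _ (show ¬ (i:ℕ) < 0 by omega),
                append_right_val _ _ _ (show ¬ ((finCongr (show 0 + N = (∑ i, k i) + N
                  by rw [hk]) i : Fin _):ℕ) < ∑ i, k i by simp only [finCongr_apply, Fin.coe_cast]; omega)]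
            exact feq u' (by simp only [finCongr_apply, Fin.coe_cast]; omega)
        · intro i
          rw [append_right_val _ _ _ (show ¬ (i:ℕ) < ∑ i, k i by omega),
              append_right_val _ _ _ (show ¬ ((finCongr (by rw [hk] : (∑ i, k i) + N = 0 + N)
                i : Fin _):ℕ) < 0 by omega)]
          exact feq u (by simp only [finCongr_apply, Fin.coe_cast]; omega)
        · intro i
          rw [append_right_val _ _ _ (show ¬ (i:ℕ) < ∑ i, k i by omega),
              append_right_val _ _ _ (show ¬ ((finCongr (by rw [hk] : (∑ i, k i) + N = 0 + N)
                i : Fin _):ℕ) < 0 by omega)]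
          exact feq u' (by simp only [finCongr_apply, Fin.coe_cast]; omega)
      rw [show (∑ i : Fin 0, w i * I (k i) (p i) (p' i)) = 0 by simp, add_zero]
      exact e1
  | succ n IHn =>
      intro N k w w' p p' u u' hp hwu
      have hksum : (∑ i : Fin (n+1), k i) = k 0 + ∑ t : Fin n, k t.succ := Fin.sum_univ_succ k
      have hw0 : ∀ i, 0 ≤ w i := fun i => by
        have h := hwu.1.1 (Fin.castAdd N i); rwa [Fin.append_left] at h
      have hu0 : ∀ i, 0 ≤ u i := fun i => by
        have h := hwu.1.1 (Fin.natAdd (n+1) i); rwa [Fin.append_right] at h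
      have hw0' : ∀ i, 0 ≤ w' i := fun i => by
        have h := hwu.2.1.1 (Fin.castAdd N i); rwa [Fin.append_left] at h
      have hu0' : ∀ i, 0 ≤ u' i := fun i => by
        have h := hwu.2.1.1 (Fin.natAdd (n+1) i); rwa [Fin.append_right] at h
      have hsum : ∑ i, w i + ∑ i, u i = 1 := by
        have h := hwu.1.2
        rw [Fin.sum_univ_add] at h
        simpa only [Fin.append_left, Fin.append_right] using h
      have hsum' : ∑ i, w' i + ∑ i, u' i = 1 := by
        have h := hwu.2.1.2
        rw [Fin.sum_univ_add] at h
        simpa only [Fin.append_left, Fin.append_right] using h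
      have hacw : ∀ i, w' i = 0 → w i = 0 := fun i h => by
        have h2 := hwu.2.2 (Fin.castAdd N i)
        rw [Fin.append_left, Fin.append_left] at h2
        exact h2 h
      have hacu : ∀ i, u' i = 0 → u i = 0 := fun i h => by
        have h2 := hwu.2.2 (Fin.natAdd (n+1) i)
        rw [Fin.append_right, Fin.append_right] at h2
        exact h2 h
      have hpd : ∀ i, ∑ l, p i l = 1 := fun i => (hp i).1.2
      have hpd' : ∀ i, ∑ l, p' i l = 1 := fun i => (hp i).2.1.2
      have hCsum : ∑ j, comp (fun t => k t.succ) (fun t => w t.succ) (fun t => p t.succ) j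
          = ∑ t : Fin n, w t.succ := sum_comp _ _ _ (fun t => hpd t.succ)
      have hCsum' : ∑ j, comp (fun t => k t.succ) (fun t => w' t.succ) (fun t => p' t.succ) j
          = ∑ t : Fin n, w' t.succ := sum_comp _ _ _ (fun t => hpd' t.succ)
      have hcomp : ∀ (ww : Fin (n+1) → ℝ) (pp : ∀ i, Fin (k i) → ℝ) (j : Fin (∑ i, k i)),
          comp k ww pp j = if h : (j:ℕ) < k 0 then ww 0 * pp 0 ⟨j, h⟩
            else comp (fun t => k t.succ) (fun t => ww t.succ) (fun t => pp t.succ)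
              ⟨(j:ℕ) - k 0, by have := j.isLt; omega⟩ := by
        intro ww pp j
        obtain ⟨x, rfl⟩ := (finSigmaEquiv k).surjective j
        obtain ⟨i, b⟩ := x
        induction i using Fin.cases with
        | zero =>
            have hv := finSigmaEquiv_zero_val k b
            have hb := b.isLt
            rw [comp_eval k ww pp _ ⟨0, b⟩ rfl,
                dif_pos (show ((finSigmaEquiv k ⟨0,b⟩ : Fin _):ℕ) < k 0 by omega)]
            exact congrArg (fun z => ww 0 * pp 0 z) (Fin.ext hv.symm)
        | succ t =>
            have hv := finSigmaEquiv_succ_val k t b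
            have hlt := (finSigmaEquiv (fun r => k r.succ) ⟨t, b⟩).isLt
            rw [comp_eval k ww pp _ ⟨t.succ, b⟩ rfl,
                dif_neg (show ¬ ((finSigmaEquiv k ⟨t.succ,b⟩ : Fin _):ℕ) < k 0 by omega),
                comp_eval _ _ _ _ ⟨t, b⟩
                  (show ((finSigmaEquiv k ⟨t.succ,b⟩ : Fin _):ℕ) - k 0
                    = ((finSigmaEquiv (fun r => k r.succ) ⟨t,b⟩ : Fin _):ℕ) by omega)]
      have hE2 : ((∑ i : Fin (n+1), k i) + N) = (k 0 + ((∑ t : Fin n, k t.succ) + N)) := by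
        rw [hksum, Nat.add_assoc]
      have key5 : ∀ (ww : Fin (n+1) → ℝ) (pp : ∀ i, Fin (k i) → ℝ) (uu : Fin N → ℝ),
          ∀ i : Fin ((∑ i : Fin (n+1), k i) + N),
            Fin.append (comp k ww pp) uu i
              = Fin.append (fun l => ww 0 * pp 0 l)
                  (Fin.append (comp (fun t => k t.succ) (fun t => ww t.succ)
                    (fun t => pp t.succ)) uu)
                  (finCongr hE2 i) := by
        intro ww pp uu i
        have hiLt := i.isLt
        have hcast : ((finCongr hE2 i : Fin _):ℕ) = (i:ℕ) := by simp [Fin.coe_cast]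
        by_cases hA : (i:ℕ) < ∑ i : Fin (n+1), k i
        · rw [append_left_val _ _ _ hA, hcomp ww pp]
          by_cases hB : (i:ℕ) < k 0
          · rw [dif_pos hB,
                append_left_val _ _ _ (show ((finCongr hE2 i : Fin _):ℕ) < k 0 by omega)]
            exact congrArg (fun z => ww 0 * pp 0 z)
              (Fin.ext (show (i:ℕ) = ((finCongr hE2 i : Fin _):ℕ) by omega))
          · rw [dif_neg hB,
                append_right_val _ _ _ (show ¬ ((finCongr hE2 i : Fin _):ℕ) < k 0 by omega),
                append_left_val _ _ _
                  (show ((finCongr hE2 i : Fin _):ℕ) - k 0 < ∑ t : Fin n, k t.succ by omega)]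
            exact feq (comp (fun t => k t.succ) (fun t => ww t.succ) (fun t => pp t.succ))
              (show (i:ℕ) - k 0 = ((finCongr hE2 i : Fin _):ℕ) - k 0 by omega)
        · rw [append_right_val _ _ _ hA,
              append_right_val _ _ _ (show ¬ ((finCongr hE2 i : Fin _):ℕ) < k 0 by omega),
              append_right_val _ _ _
                (show ¬ ((finCongr hE2 i : Fin _):ℕ) - k 0 < ∑ t : Fin n, k t.succ by omega)]
          exact feq uu (show (i:ℕ) - (∑ t : Fin (n+1), k t)
            = ((finCongr hE2 i : Fin _):ℕ) - k 0 - (∑ t : Fin n, k t.succ) by omega)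
      have hCpair : RelPair (Fin.append (comp k w p) u) (Fin.append (comp k w' p') u') := by
        refine relPair_append ?_ ?_ ?_ ?_ ?_ ?_ ?_ ?_
        · exact fun j => comp_nonneg hw0 (fun i l => (hp i).1.1 l) j
        · exact hu0
        · exact fun j => comp_nonneg hw0' (fun i l => (hp i).2.1.1 l) j
        · exact hu0'
        · rw [sum_comp k w p hpd]; exact hsum
        · rw [sum_comp k w' p' hpd']; exact hsum'
        · exact fun j h => comp_ac hacw (fun i l hl => (hp i).2.2 l hl) j h
        · exact hacu
      have step1 : I ((∑ i : Fin (n+1), k i) + N)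
            (Fin.append (comp k w p) u) (Fin.append (comp k w' p') u')
          = I (k 0 + ((∑ t : Fin n, k t.succ) + N))
            (Fin.append (fun l => w 0 * p 0 l)
              (Fin.append (comp (fun t => k t.succ) (fun t => w t.succ) (fun t => p t.succ)) u))
            (Fin.append (fun l => w' 0 * p' 0 l)
              (Fin.append (comp (fun t => k t.succ) (fun t => w' t.succ)
                (fun t => p' t.succ)) u')) :=
        I_transfer hS (finCongr hE2) hCpair (fun i => key5 w p u i) (fun i => key5 w' p' u' i)
      have huApair : RelPair
          (Fin.cons (w 0) (Fin.append (comp (fun t => k t.succ) (fun t => w t.succ)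
            (fun t => p t.succ)) u))
          (Fin.cons (w' 0) (Fin.append (comp (fun t => k t.succ) (fun t => w' t.succ)
            (fun t => p' t.succ)) u')) := by
        refine relPair_cons (hw0 0) (hw0' 0) ?_ ?_ ?_ ?_ (hacw 0) ?_
        · intro i
          rw [append_apply]
          split_ifs
          · exact comp_nonneg (fun t => hw0 t.succ) (fun t l => (hp t.succ).1.1 l) _
          · exact hu0 _
        · intro i
          rw [append_apply]
          split_ifs
          · exact comp_nonneg (fun t => hw0' t.succ) (fun t l => (hp t.succ).2.1.1 l) _
          · exact hu0' _
        · rw [Fin.sum_univ_add]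
          simp only [Fin.append_left, Fin.append_right]
          rw [hCsum]
          have h2 : w 0 + ∑ t : Fin n, w t.succ = ∑ i, w i := (Fin.sum_univ_succ w).symm
          linarith [hsum]
        · rw [Fin.sum_univ_add]
          simp only [Fin.append_left, Fin.append_right]
          rw [hCsum']
          have h2 : w' 0 + ∑ t : Fin n, w' t.succ = ∑ i, w' i := (Fin.sum_univ_succ w').symm
          linarith [hsum']
        · intro i h
          rw [append_apply] at h ⊢
          split_ifs at h ⊢
          · exact comp_ac (fun t => hacw t.succ) (fun t l hl => (hp t.succ).2.2 l hl) _ h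
          · exact hacu _ h
      have step2 : I (k 0 + ((∑ t : Fin n, k t.succ) + N))
            (Fin.append (fun l => w 0 * p 0 l)
              (Fin.append (comp (fun t => k t.succ) (fun t => w t.succ) (fun t => p t.succ)) u))
            (Fin.append (fun l => w' 0 * p' 0 l)
              (Fin.append (comp (fun t => k t.succ) (fun t => w' t.succ)
                (fun t => p' t.succ)) u'))
          = I (((∑ t : Fin n, k t.succ) + N) + 1)
              (Fin.cons (w 0) (Fin.append (comp (fun t => k t.succ) (fun t => w t.succ)
                (fun t => p t.succ)) u))
              (Fin.cons (w' 0) (Fin.append (comp (fun t => k t.succ) (fun t => w' t.succ)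
                (fun t => p' t.succ)) u'))
            + w 0 * I (k 0) (p 0) (p' 0) :=
        lemA hS hR (k 0) ((∑ t : Fin n, k t.succ) + N) (p 0) (p' 0) _ _ (hp 0) huApair
      have key6 : ∀ (a : ℝ) (CC : Fin (∑ t : Fin n, k t.succ) → ℝ) (uu : Fin N → ℝ),
          ∀ i : Fin (((∑ t : Fin n, k t.succ) + N) + 1),
            (Fin.cons a (Fin.append CC uu) : Fin (((∑ t : Fin n, k t.succ)+N)+1) → ℝ) i
              = Fin.append CC (Fin.cons a uu) ((cycleE (∑ t : Fin n, k t.succ) N) i) := by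
        intro a CC uu i
        have hev := cycleE_val (∑ t : Fin n, k t.succ) N i
        have hiLt := i.isLt
        by_cases h0 : (i:ℕ) = 0
        · rw [if_pos h0] at hev
          rw [cons_zero_val _ _ _ h0,
              append_right_val _ _ _ (show ¬ ((cycleE (∑ t : Fin n, k t.succ) N i : Fin _):ℕ)
                < ∑ t : Fin n, k t.succ by omega),
              cons_zero_val _ _ _ (show ((cycleE (∑ t : Fin n, k t.succ) N i : Fin _):ℕ)
                - (∑ t : Fin n, k t.succ) = 0 by omega)]
        · rw [if_neg h0] at hev
          rw [cons_succ_val _ _ _ h0]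
          by_cases h1 : (i:ℕ) ≤ ∑ t : Fin n, k t.succ
          · rw [if_pos h1] at hev
            rw [append_left_val _ _ _ (show (i:ℕ) - 1 < ∑ t : Fin n, k t.succ by omega),
                append_left_val _ _ _ (show ((cycleE (∑ t : Fin n, k t.succ) N i : Fin _):ℕ)
                  < ∑ t : Fin n, k t.succ by omega)]
            exact feq CC (show (i:ℕ) - 1
              = ((cycleE (∑ t : Fin n, k t.succ) N i : Fin _):ℕ) by omega)
          · rw [if_neg h1] at hev
            rw [append_right_val _ _ _ (show ¬ (i:ℕ) - 1 < ∑ t : Fin n, k t.succ by omega),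
                append_right_val _ _ _ (show ¬ ((cycleE (∑ t : Fin n, k t.succ) N i : Fin _):ℕ)
                  < ∑ t : Fin n, k t.succ by omega),
                cons_succ_val _ _ _ (show ¬ ((cycleE (∑ t : Fin n, k t.succ) N i : Fin _):ℕ)
                  - (∑ t : Fin n, k t.succ) = 0 by omega)]
            exact feq uu (show (i:ℕ) - 1 - (∑ t : Fin n, k t.succ)
              = ((cycleE (∑ t : Fin n, k t.succ) N i : Fin _):ℕ)
                - (∑ t : Fin n, k t.succ) - 1 by omega)
      have step3 : I (((∑ t : Fin n, k t.succ) + N) + 1)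
            (Fin.cons (w 0) (Fin.append (comp (fun t => k t.succ) (fun t => w t.succ)
              (fun t => p t.succ)) u))
            (Fin.cons (w' 0) (Fin.append (comp (fun t => k t.succ) (fun t => w' t.succ)
              (fun t => p' t.succ)) u'))
          = I ((∑ t : Fin n, k t.succ) + (N+1))
            (Fin.append (comp (fun t => k t.succ) (fun t => w t.succ) (fun t => p t.succ))
              (Fin.cons (w 0) u))
            (Fin.append (comp (fun t => k t.succ) (fun t => w' t.succ) (fun t => p' t.succ))
              (Fin.cons (w' 0) u')) :=
        I_transfer hS (cycleE (∑ t : Fin n, k t.succ) N) huApair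
          (fun i => key6 (w 0) _ u i) (fun i => key6 (w' 0) _ u' i)
      have hWU2 : RelPair (Fin.append (fun t : Fin n => w t.succ) (Fin.cons (w 0) u))
          (Fin.append (fun t : Fin n => w' t.succ) (Fin.cons (w' 0) u')) := by
        refine relPair_append ?_ ?_ ?_ ?_ ?_ ?_ ?_ ?_
        · exact fun t => hw0 t.succ
        · intro i
          induction i using Fin.cases with
          | zero => simpa using hw0 0
          | succ j => simpa using hu0 j
        · exact fun t => hw0' t.succ
        · intro i
          induction i using Fin.cases with
          | zero => simpa using hw0' 0
          | succ j => simpa using hu0' j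
        · rw [Fin.sum_univ_succ (Fin.cons (w 0) u)]
          simp only [Fin.cons_zero, Fin.cons_succ]
          have h2 : w 0 + ∑ t : Fin n, w t.succ = ∑ i, w i := (Fin.sum_univ_succ w).symm
          linarith [hsum]
        · rw [Fin.sum_univ_succ (Fin.cons (w' 0) u')]
          simp only [Fin.cons_zero, Fin.cons_succ]
          have h2 : w' 0 + ∑ t : Fin n, w' t.succ = ∑ i, w' i := (Fin.sum_univ_succ w').symm
          linarith [hsum']
        · exact fun t h => hacw t.succ h
        · intro i h
          induction i using Fin.cases with
          | zero =>
              simp only [Fin.cons_zero] at h ⊢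
              exact hacw 0 h
          | succ j =>
              simp only [Fin.cons_succ] at h ⊢
              exact hacu j h
      have step4 := IHn (N+1) (fun t => k t.succ) (fun t => w t.succ) (fun t => w' t.succ)
        (fun t => p t.succ) (fun t => p' t.succ) (Fin.cons (w 0) u) (Fin.cons (w' 0) u')
        (fun t => hp t.succ) hWU2
      set E3 : Fin ((n+1)+N) ≃ Fin ((n+N)+1) := finCongr (show (n+1)+N = (n+N)+1 by omega)
        with hE3def
      have key7 : ∀ (ww : Fin (n+1) → ℝ) (uu : Fin N → ℝ),
          ∀ i : Fin ((n+1)+N), Fin.append ww uu i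
            = Fin.append (fun t : Fin n => ww t.succ) (Fin.cons (ww 0) uu)
                ((cycleE n N) (E3 i)) := by
        intro ww uu i
        have hiLt := i.isLt
        have hev : (((cycleE n N) (E3 i) : Fin _):ℕ)
            = if (i:ℕ) = 0 then n else if (i:ℕ) ≤ n then (i:ℕ) - 1 else (i:ℕ) := by
          simp only [hE3def, cycleE_val, finCongr_apply, Fin.coe_cast]
        by_cases h0 : (i:ℕ) = 0
        · rw [if_pos h0] at hev
          rw [append_left_val _ _ _ (show (i:ℕ) < n+1 by omega),
              append_right_val _ _ _ (show ¬ (((cycleE n N) (E3 i) : Fin _):ℕ) < n by omega),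
              cons_zero_val _ _ _ (show (((cycleE n N) (E3 i) : Fin _):ℕ) - n = 0 by omega)]
          exact feq ww (show (i:ℕ) = ((0 : Fin (n+1)):ℕ) by simp [h0])
        · by_cases h1 : (i:ℕ) ≤ n
          · rw [if_neg h0, if_pos h1] at hev
            rw [append_left_val _ _ _ (show (i:ℕ) < n+1 by omega),
                append_left_val _ _ _ (show (((cycleE n N) (E3 i) : Fin _):ℕ) < n by omega)]
            exact feq ww (show (i:ℕ) = (((cycleE n N) (E3 i) : Fin _):ℕ) + 1 by omega)
          · rw [if_neg h0, if_neg h1] at hev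
            rw [append_right_val _ _ _ (show ¬ (i:ℕ) < n+1 by omega),
                append_right_val _ _ _ (show ¬ (((cycleE n N) (E3 i) : Fin _):ℕ) < n by omega),
                cons_succ_val _ _ _ (show ¬ (((cycleE n N) (E3 i) : Fin _):ℕ) - n = 0 by omega)]
            exact feq uu (show (i:ℕ) - (n+1)
              = (((cycleE n N) (E3 i) : Fin _):ℕ) - n - 1 by omega)
      have step5 : I ((n+1)+N) (Fin.append w u) (Fin.append w' u')
          = I (n+(N+1)) (Fin.append (fun t : Fin n => w t.succ) (Fin.cons (w 0) u))
              (Fin.append (fun t : Fin n => w' t.succ) (Fin.cons (w' 0) u')) :=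
        I_transfer hS (E3.trans (cycleE n N)) hwu
          (fun i => key7 w u i) (fun i => key7 w' u' i)
      have hsum2 : ∑ i : Fin (n+1), w i * I (k i) (p i) (p' i)
          = w 0 * I (k 0) (p 0) (p' 0)
            + ∑ t : Fin n, w t.succ * I (k t.succ) (p t.succ) (p' t.succ) :=
        Fin.sum_univ_succ _
      refine (step1.trans step2).trans ?_
      rw [step3, step4, step5, hsum2]
      ring

lemma finSigmaEquiv_ones : ∀ {n : ℕ} (k : Fin n → ℕ), (∀ i, k i = 1) →
    ∀ (x : Σ i, Fin (k i)), ((finSigmaEquiv k x : Fin _):ℕ) = (x.1:ℕ) := by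
  intro n
  induction n with
  | zero => intro k hk x; exact x.1.elim0
  | succ n IH =>
      intro k hk x
      obtain ⟨i, b⟩ := x
      induction i using Fin.cases with
      | zero =>
          rw [finSigmaEquiv_zero_val]
          have hb := b.isLt
          have h0 := hk 0
          simp only [Fin.val_zero]
          omega
      | succ t =>
          rw [finSigmaEquiv_succ_val, IH (fun r => k r.succ) (fun r => hk r.succ) ⟨t, b⟩]
          have h0 := hk 0
          simp only [Fin.val_succ]
          omega

lemma chain_of_rec {I : ∀ n : ℕ, (Fin n → ℝ) → (Fin n → ℝ) → ℝ} (hS : SymmRel I)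
    (hR : Recursivity I) : ChainRule I := by
  intro n k w w' p p' hw hp
  have hcompPair : RelPair (comp k w p) (comp k w' p') :=
    ⟨⟨fun j => comp_nonneg hw.1.1 (fun i l => (hp i).1.1 l) j,
        by rw [sum_comp k w p (fun i => (hp i).1.2)]; exact hw.1.2⟩,
      ⟨fun j => comp_nonneg hw.2.1.1 (fun i l => (hp i).2.1.1 l) j,
        by rw [sum_comp k w' p' (fun i => (hp i).2.1.2)]; exact hw.2.1.2⟩,
      fun j h => comp_ac hw.2.2 (fun i l hl => (hp i).2.2 l hl) j h⟩
  have hwu0 : RelPair (Fin.append w (Fin.elim0 : Fin 0 → ℝ))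
      (Fin.append w' (Fin.elim0 : Fin 0 → ℝ)) := by
    refine relPair_transfer (finCongr (rfl : n = n + 0)) ?_ ?_ hw
    · intro i
      rw [append_left_val _ _ _
        (show ((finCongr (rfl : n = n+0) i : Fin _):ℕ) < n
          by simp only [finCongr_apply, Fin.coe_cast]; omega)]
      exact feq w (by simp only [finCongr_apply, Fin.coe_cast])
    · intro i
      rw [append_left_val _ _ _
        (show ((finCongr (rfl : n = n+0) i : Fin _):ℕ) < n
          by simp only [finCongr_apply, Fin.coe_cast]; omega)]
      exact feq w' (by simp only [finCongr_apply, Fin.coe_cast])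
  have hB := lemB hS hR n 0 k w w' p p' Fin.elim0 Fin.elim0 hp hwu0
  have tL : I (∑ i, k i) (comp k w p) (comp k w' p')
      = I ((∑ i, k i) + 0) (Fin.append (comp k w p) Fin.elim0)
          (Fin.append (comp k w' p') Fin.elim0) := by
    refine I_transfer hS (finCongr (rfl : (∑ i, k i) = (∑ i, k i) + 0)) hcompPair ?_ ?_
    · intro j
      rw [append_left_val _ _ _
        (show ((finCongr (rfl : (∑ i, k i) = (∑ i, k i)+0) j : Fin _):ℕ) < ∑ i, k i
          by simp only [finCongr_apply, Fin.coe_cast]; omega)]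
      exact feq (comp k w p) (by simp only [finCongr_apply, Fin.coe_cast])
    · intro j
      rw [append_left_val _ _ _
        (show ((finCongr (rfl : (∑ i, k i) = (∑ i, k i)+0) j : Fin _):ℕ) < ∑ i, k i
          by simp only [finCongr_apply, Fin.coe_cast]; omega)]
      exact feq (comp k w' p') (by simp only [finCongr_apply, Fin.coe_cast])
  have tR : I n w w' = I (n + 0) (Fin.append w Fin.elim0) (Fin.append w' Fin.elim0) := by
    refine I_transfer hS (finCongr (rfl : n = n + 0)) hw ?_ ?_
    · intro i
      rw [append_left_val _ _ _
        (show ((finCongr (rfl : n = n+0) i : Fin _):ℕ) < n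
          by simp only [finCongr_apply, Fin.coe_cast]; omega)]
      exact feq w (by simp only [finCongr_apply, Fin.coe_cast])
    · intro i
      rw [append_left_val _ _ _
        (show ((finCongr (rfl : n = n+0) i : Fin _):ℕ) < n
          by simp only [finCongr_apply, Fin.coe_cast]; omega)]
      exact feq w' (by simp only [finCongr_apply, Fin.coe_cast])
  rw [tL, tR]
  exact hB

lemma rec_of_chain {I : ∀ n : ℕ, (Fin n → ℝ) → (Fin n → ℝ) → ℝ} (hS : SymmRel I)
    (hC : ChainRule I) : Recursivity I := by
  have hone : IsDist (fun _ : Fin 1 => (1:ℝ)) := ⟨fun _ => zero_le_one, by simp⟩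
  have honeP : RelPair (fun _ : Fin 1 => (1:ℝ)) (fun _ : Fin 1 => (1:ℝ)) :=
    ⟨hone, hone, fun _ h => h⟩
  have hI1c : I 1 (fun _ => 1) (fun _ => 1) = 0 := by
    have hcp : RelPair (comp (fun _ : Fin 1 => 1) (fun _ => (1:ℝ)) (fun _ _ => (1:ℝ)))
        (comp (fun _ : Fin 1 => 1) (fun _ => (1:ℝ)) (fun _ _ => (1:ℝ))) :=
      ⟨⟨fun j => comp_nonneg (fun _ => zero_le_one) (fun _ _ => zero_le_one) j,
          by rw [sum_comp _ _ _ (fun i => by simp)]; simp⟩,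
        ⟨fun j => comp_nonneg (fun _ => zero_le_one) (fun _ _ => zero_le_one) j,
          by rw [sum_comp _ _ _ (fun i => by simp)]; simp⟩,
        fun _ h => h⟩
    have h := hC 1 (fun _ => 1) (fun _ => 1) (fun _ => 1) (fun _ _ => 1) (fun _ _ => 1)
      honeP (fun _ => honeP)
    have ht : I (∑ i : Fin 1, (1:ℕ))
        (comp (fun _ : Fin 1 => 1) (fun _ => (1:ℝ)) (fun _ _ => (1:ℝ)))
        (comp (fun _ : Fin 1 => 1) (fun _ => (1:ℝ)) (fun _ _ => (1:ℝ)))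
        = I 1 (fun _ => 1) (fun _ => 1) := by
      refine I_transfer hS (finCongr (show (∑ i : Fin 1, (1:ℕ)) = 1 by simp)) hcp ?_ ?_ <;>
        exact fun j => mul_one 1
    rw [ht] at h
    rw [Fin.sum_univ_one, one_mul] at h
    linarith
  have hI1 : ∀ (a b : Fin 1 → ℝ), RelPair a b → I 1 a b = 0 := by
    intro a b hab
    have ha : a = fun _ => 1 := funext fun i => dist_fin_one hab.1 i
    have hb : b = fun _ => 1 := funext fun i => dist_fin_one hab.2.1 i
    rw [ha, hb, hI1c]
  intro n w w' pp pp' hw hp2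
  set k : Fin (n+1) → ℕ := Fin.cons 2 (fun _ => 1) with hkdef
  set P : ∀ i, Fin (k i) → ℝ :=
    Fin.cons (α := fun i => Fin (k i) → ℝ) ![pp, 1-pp] (fun _ => fun _ => 1) with hPdef
  set P' : ∀ i, Fin (k i) → ℝ :=
    Fin.cons (α := fun i => Fin (k i) → ℝ) ![pp', 1-pp'] (fun _ => fun _ => 1) with hP'def
  have hPrel : ∀ i, RelPair (P i) (P' i) := by
    intro i
    induction i using Fin.cases with
    | zero => exact hp2
    | succ t => exact honeP
  have h := hC (n+1) k w w' P P' hw hPrel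
  have hks : (∑ i, k i) = n + 2 := by
    rw [Fin.sum_univ_succ]
    simp only [hkdef, Fin.cons_zero, Fin.cons_succ]
    simp
    omega
  have hsumR : ∑ i, w i * I (k i) (P i) (P' i)
      = w 0 * I 2 ![pp, 1-pp] ![pp', 1-pp'] := by
    have hz : ∀ t : Fin n, w t.succ * I (k t.succ) (P t.succ) (P' t.succ) = 0 := by
      intro t
      have h1 : I (k t.succ) (P t.succ) (P' t.succ) = 0 := hI1 _ _ honeP
      rw [h1, mul_zero]
    have h2 : ∑ t : Fin n, w t.succ * I (k t.succ) (P t.succ) (P' t.succ) = 0 :=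
      Finset.sum_eq_zero (fun t _ => hz t)
    rw [Fin.sum_univ_succ, h2, add_zero]
    rfl
  have hcompPair2 : RelPair (comp k w P) (comp k w' P') :=
    ⟨⟨fun j => comp_nonneg hw.1.1 (fun i l => (hPrel i).1.1 l) j,
        by rw [sum_comp k w P (fun i => (hPrel i).1.2)]; exact hw.1.2⟩,
      ⟨fun j => comp_nonneg hw.2.1.1 (fun i l => (hPrel i).2.1.1 l) j,
        by rw [sum_comp k w' P' (fun i => (hPrel i).2.1.2)]; exact hw.2.1.2⟩,
      fun j hh => comp_ac hw.2.2 (fun i l hl => (hPrel i).2.2 l hl) j hh⟩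
  have hcast : ∀ jj : Fin (∑ i, k i), ((finCongr hks jj : Fin _):ℕ) = (jj:ℕ) := fun jj => by
    simp only [finCongr_apply, Fin.coe_cast]
  have key8 : ∀ (ww : Fin (n+1) → ℝ) (a b : ℝ) (PP : ∀ i, Fin (k i) → ℝ),
      PP 0 = ![a, b] → (∀ (t : Fin n) (l : Fin (k t.succ)), PP t.succ l = 1) →
      ∀ j, comp k ww PP j
        = (Fin.cons (a * ww 0) (Fin.cons (b * ww 0) (fun i => ww i.succ)) : Fin (n+2) → ℝ)
            (finCongr hks j) := by
    intro ww a b PP hPP0 hPPs j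
    obtain ⟨x, rfl⟩ := (finSigmaEquiv k).surjective j
    obtain ⟨i, c⟩ := x
    have hk0 : k 0 = 2 := rfl
    induction i using Fin.cases with
    | zero =>
        have hv := finSigmaEquiv_zero_val k c
        have hc2 : (c:ℕ) < 2 := by rw [← hk0]; exact c.isLt
        rw [comp_eval k ww PP _ ⟨0, c⟩ rfl, cons2_apply]
        by_cases hc0 : (c:ℕ) = 0
        · rw [dif_pos (show ((finCongr hks (finSigmaEquiv k ⟨0,c⟩) : Fin _):ℕ) = 0
            by rw [hcast]; omega)]
          rw [hPP0, show c = (⟨0, by rw [hk0]; omega⟩ : Fin (k 0)) from Fin.ext hc0]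
          show ww 0 * a = a * ww 0
          ring
        · rw [dif_neg (show ¬ ((finCongr hks (finSigmaEquiv k ⟨0,c⟩) : Fin _):ℕ) = 0
              by rw [hcast]; omega),
            dif_pos (show ((finCongr hks (finSigmaEquiv k ⟨0,c⟩) : Fin _):ℕ) = 1
              by rw [hcast]; omega)]
          rw [hPP0, show c = (⟨1, by rw [hk0]; omega⟩ : Fin (k 0))
            from Fin.ext (show (c:ℕ) = 1 by omega)]
          show ww 0 * b = b * ww 0
          ring
    | succ t =>
        have hv := finSigmaEquiv_succ_val k t c
        have hones2 := finSigmaEquiv_ones (fun r => k r.succ) (fun r => rfl) ⟨t, c⟩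
        have htlt := t.isLt
        have hv2 : ((finSigmaEquiv k ⟨t.succ,c⟩ : Fin _):ℕ) = 2 + (t:ℕ) := by
          rw [hv, hones2, hk0]
        rw [comp_eval k ww PP _ ⟨t.succ, c⟩ rfl, cons2_apply]
        rw [dif_neg (show ¬ ((finCongr hks (finSigmaEquiv k ⟨t.succ,c⟩) : Fin _):ℕ) = 0
              by rw [hcast]; omega),
            dif_neg (show ¬ ((finCongr hks (finSigmaEquiv k ⟨t.succ,c⟩) : Fin _):ℕ) = 1
              by rw [hcast]; omega)]
        rw [hPPs t c, mul_one]
        exact feq ww (show ((t.succ : Fin (n+1)):ℕ)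
          = ((finCongr hks (finSigmaEquiv k ⟨t.succ,c⟩) : Fin _):ℕ) - 2 + 1
          by rw [hcast]; simp only [Fin.val_succ]; omega)
  have tL : I (∑ i, k i) (comp k w P) (comp k w' P')
      = I (n+2) (Fin.cons (pp * w 0) (Fin.cons ((1-pp) * w 0) (fun i => w i.succ)))
          (Fin.cons (pp' * w' 0) (Fin.cons ((1-pp') * w' 0) (fun i => w' i.succ))) :=
    I_transfer hS (finCongr hks) hcompPair2
      (fun j => key8 w pp (1-pp) P rfl (fun t l => rfl) j)
      (fun j => key8 w' pp' (1-pp') P' rfl (fun t l => rfl) j)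
  rw [← tL, h, hsumR]


/-- In the presence of symmetry, the full chain rule is equivalent to
recursivity. -/
theorem chainRule_iff_recursivity (I : ∀ n : ℕ, (Fin n → ℝ) → (Fin n → ℝ) → ℝ)
    (hS : SymmRel I) : ChainRule I ↔ Recursivity I :=
  ⟨fun hC => rec_of_chain hS hC, fun hR => chain_of_rec hS hR⟩
end

section
/- Let q ∈ ℝ with q ≠ 1 and let (I_n : Δ_n → ℝ)_{n ≥ 1} satisfy q-multiplicativity and symmetry. Then for all n, k ≥ 1, w ∈ Δ_n, and p ∈ Δ_k, (∑_{i : w_i > 0} w_i^q − 1) · I_k(p) = (∑_{i : p_i > 0} p_i^q − 1) · I_n(w). -/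
open Finset MeasureTheory

/-- The tensor product `w ⊗ p = (w₁p₁, …, w₁p_k, …, wₙp₁, …, wₙp_k) ∈ Δ_{nk}`. -/
def tensor {n k : ℕ} (w : Fin n → ℝ) (p : Fin k → ℝ) : Fin (n * k) → ℝ :=
  fun j => w (finProdFinEquiv.symm j).1 * p (finProdFinEquiv.symm j).2

/-- q-multiplicativity: `I(w ⊗ p) = I(w) + (∑_{i : wᵢ > 0} wᵢ^q) I(p)`. -/
def QMult (q : ℝ) (I : ∀ n : ℕ, (Fin n → ℝ) → ℝ) : Prop :=
  ∀ (n k : ℕ) (w : Fin n → ℝ) (p : Fin k → ℝ), IsDist w → IsDist p →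
    I (n * k) (tensor w p) = I n w + (∑ i, if 0 < w i then w i ^ q else 0) * I k p

/-- Symmetry: `I(p) = I(pσ)` for every permutation `σ`, where `(pσ)ᵢ = p_{σ(i)}`. -/
def SymmEnt (I : ∀ n : ℕ, (Fin n → ℝ) → ℝ) : Prop :=
  ∀ (n : ℕ) (p : Fin n → ℝ) (σ : Equiv.Perm (Fin n)), IsDist p → I n p = I n (p ∘ σ)

/-!
`w ⊗ p` and `p ⊗ w` differ only by a reordering of coordinates, so by symmetry `I` takes the same
value on both; expanding each side by q-multiplicativity and cancelling gives the identity.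
-/

lemma IsDist.tensor {n k : ℕ} {w : Fin n → ℝ} {p : Fin k → ℝ} (hw : IsDist w)
    (hp : IsDist p) : IsDist (tensor w p) := by
  refine ⟨fun _ => mul_nonneg (hw.1 _) (hp.1 _), ?_⟩
  rw [← Equiv.sum_comp finProdFinEquiv, Fintype.sum_prod_type]
  simp only [_root_.tensor, Equiv.symm_apply_apply]
  rw [← Finset.sum_mul_sum, hw.2, hp.2, one_mul]

lemma SymmEnt.apply_comp_equiv {I : ∀ n : ℕ, (Fin n → ℝ) → ℝ} (hSymm : SymmEnt I) {m n : ℕ}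
    {f : Fin n → ℝ} (hf : IsDist f) (e : Fin m ≃ Fin n) : I m (f ∘ e) = I n f := by
  obtain rfl : m = n := by simpa using Fintype.card_congr e
  exact (hSymm m f e hf).symm

lemma tensor_comp_swap {n k : ℕ} (w : Fin n → ℝ) (p : Fin k → ℝ) :
    tensor p w ∘ (finProdFinEquiv.symm.trans
      ((Equiv.prodComm (Fin n) (Fin k)).trans finProdFinEquiv)) = tensor w p := by
  funext j
  simp only [tensor, Function.comp_apply, Equiv.trans_apply, Equiv.symm_apply_apply,
    Equiv.prodComm_apply, Prod.fst_swap, Prod.snd_swap]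
  exact mul_comm _ _

lemma SymmEnt.apply_tensor_comm {I : ∀ n : ℕ, (Fin n → ℝ) → ℝ} (hSymm : SymmEnt I) {n k : ℕ}
    {w : Fin n → ℝ} {p : Fin k → ℝ} (hw : IsDist w) (hp : IsDist p) :
    I (n * k) (tensor w p) = I (k * n) (tensor p w) := by
  rw [← tensor_comp_swap w p, hSymm.apply_comp_equiv (hp.tensor hw)]

theorem qMult_symm_key_general (q : ℝ) (I : ∀ n : ℕ, (Fin n → ℝ) → ℝ)
    (hMult : QMult q I) (hSymm : SymmEnt I)
    (n k : ℕ) (w : Fin n → ℝ) (p : Fin k → ℝ) (hw : IsDist w) (hp : IsDist p) :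
    ((∑ i, if 0 < w i then w i ^ q else 0) - 1) * I k p =
      ((∑ i, if 0 < p i then p i ^ q else 0) - 1) * I n w := by
  have key := hSymm.apply_tensor_comm hw hp
  rw [hMult n k w p hw hp, hMult k n p w hp hw] at key
  linarith

/-- The key step in the characterization of q-logarithmic entropy:
`(∑_{i : wᵢ > 0} wᵢ^q - 1) I(p) = (∑_{i : pᵢ > 0} pᵢ^q - 1) I(w)`. -/
theorem qMult_symm_key (q : ℝ) (hq : q ≠ 1) (I : ∀ n : ℕ, (Fin n → ℝ) → ℝ)
    (hMult : QMult q I) (hSymm : SymmEnt I)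
    (n k : ℕ) (w : Fin n → ℝ) (p : Fin k → ℝ) (hw : IsDist w) (hp : IsDist p) :
    ((∑ i, if 0 < w i then w i ^ q else 0) - 1) * I k p =
      ((∑ i, if 0 < p i then p i ^ q else 0) - 1) * I n w :=
  qMult_symm_key_general q I hMult hSymm n k w p hw hp
end

section
/- Let q ∈ ℝ with q ≠ 1 and let (I_n : A_n → ℝ)_{n ≥ 1} satisfy q-multiplicativity and symmetry. Then for all n, k ≥ 1, (w,w̃) ∈ A_n, and (p,p̃) ∈ A_k, (∑_{i : w_i > 0} w_i^q w̃_i^{1−q} − 1) · I_k(p‖p̃) = (∑_{i : p_i > 0} p_i^q p̃_i^{1−q} − 1) · I_n(w‖w̃). -/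
open Finset MeasureTheory

/-- q-multiplicativity for relative entropies:
`I(w ⊗ p ‖ w̃ ⊗ p̃) = I(w ‖ w̃) + (∑_{i : wᵢ > 0} wᵢ^q w̃ᵢ^{1-q}) I(p ‖ p̃)`. -/
def QMultRel (q : ℝ) (I : ∀ n : ℕ, (Fin n → ℝ) → (Fin n → ℝ) → ℝ) : Prop :=
  ∀ (n k : ℕ) (w w' : Fin n → ℝ) (p p' : Fin k → ℝ),
    RelPair w w' → RelPair p p' →
    I (n * k) (tensor w p) (tensor w' p') =
      I n w w' + (∑ i, if 0 < w i then w i ^ q * w' i ^ (1 - q) else 0) * I k p p'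

lemma relPair_comp {m m' : ℕ} (e : Fin m' ≃ Fin m) {a b : Fin m → ℝ}
    (h : RelPair a b) : RelPair (a ∘ e) (b ∘ e) := by
  obtain ⟨⟨ha0, ha1⟩, ⟨hb0, hb1⟩, hab⟩ := h
  refine ⟨⟨fun i => ha0 _, ?_⟩, ⟨fun i => hb0 _, ?_⟩, fun i h => hab _ h⟩
  · rw [← ha1]; exact Equiv.sum_comp e a
  · rw [← hb1]; exact Equiv.sum_comp e b

lemma relPair_tensor {n k : ℕ} {w w' : Fin n → ℝ} {p p' : Fin k → ℝ}
    (hw : RelPair w w') (hp : RelPair p p') :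
    RelPair (tensor w p) (tensor w' p') := by
  obtain ⟨⟨hw0, hw1⟩, ⟨hw'0, hw'1⟩, hww⟩ := hw
  obtain ⟨⟨hp0, hp1⟩, ⟨hp'0, hp'1⟩, hpp⟩ := hp
  have hsum : ∀ (a : Fin n → ℝ) (b : Fin k → ℝ),
      ∑ j, tensor a b j = (∑ i, a i) * (∑ i, b i) := by
    intro a b
    rw [← Equiv.sum_comp finProdFinEquiv (tensor a b), Fintype.sum_prod_type,
      sum_mul]
    refine Finset.sum_congr rfl fun i _ => ?_
    rw [mul_sum]
    refine Finset.sum_congr rfl fun j _ => ?_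
    simp [tensor]
  refine ⟨⟨fun j => mul_nonneg (hw0 _) (hp0 _), by rw [hsum, hw1, hp1]; ring⟩,
    ⟨fun j => mul_nonneg (hw'0 _) (hp'0 _), by rw [hsum, hw'1, hp'1]; ring⟩,
    fun j h => ?_⟩
  rcases mul_eq_zero.1 h with h | h
  · exact mul_eq_zero_of_left (hww _ h) _
  · exact mul_eq_zero_of_right _ (hpp _ h)

lemma I_cast (I : ∀ n : ℕ, (Fin n → ℝ) → (Fin n → ℝ) → ℝ)
    {m m' : ℕ} (h : m = m') (a b : Fin m → ℝ) :
    I m a b = I m' (a ∘ Fin.cast h.symm) (b ∘ Fin.cast h.symm) := by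
  subst h; rfl

/-- The key step in the characterization of q-logarithmic relative entropy:
`(∑_{i : wᵢ > 0} wᵢ^q w̃ᵢ^{1-q} - 1) I(p ‖ p̃) = (∑_{i : pᵢ > 0} pᵢ^q p̃ᵢ^{1-q} - 1) I(w ‖ w̃)`. -/
theorem qMultRel_symm_key (q : ℝ) (hq : q ≠ 1)
    (I : ∀ n : ℕ, (Fin n → ℝ) → (Fin n → ℝ) → ℝ)
    (hMult : QMultRel q I) (hSymm : SymmRel I)
    (n k : ℕ) (w w' : Fin n → ℝ) (p p' : Fin k → ℝ)
    (hw : RelPair w w') (hp : RelPair p p') :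
    ((∑ i, if 0 < w i then w i ^ q * w' i ^ (1 - q) else 0) - 1) * I k p p' =
      ((∑ i, if 0 < p i then p i ^ q * p' i ^ (1 - q) else 0) - 1) * I n w w' := by
  have h1 := hMult n k w w' p p' hw hp
  have h2 := hMult k n p p' w w' hp hw
  have hh : k * n = n * k := Nat.mul_comm k n
  let σ : Equiv.Perm (Fin (n * k)) :=
    finProdFinEquiv.symm.trans ((Equiv.prodComm (Fin n) (Fin k)).trans
      (finProdFinEquiv.trans (finCongr hh)))
  have h3 : I (n * k) (tensor w p) (tensor w' p') =
      I (k * n) (tensor p w) (tensor p' w') := by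
    rw [I_cast I hh (tensor p w) (tensor p' w')]
    have hrp : RelPair (tensor p w ∘ Fin.cast hh.symm)
        (tensor p' w' ∘ Fin.cast hh.symm) :=
      relPair_comp (finCongr hh.symm) (relPair_tensor hp hw)
    rw [hSymm (n * k) _ _ σ hrp]
    have key : ∀ (a : Fin k → ℝ) (b : Fin n → ℝ),
        ((tensor a b ∘ Fin.cast hh.symm) ∘ σ) = tensor b a := by
      intro a b
      funext j
      show tensor a b (Fin.cast hh.symm (σ j)) = tensor b a j
      have : Fin.cast hh.symm (σ j) =
          finProdFinEquiv ((finProdFinEquiv.symm j).2, (finProdFinEquiv.symm j).1) := by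
        apply Fin.ext
        simp [σ, finCongr]
      rw [this]
      simp [tensor, mul_comm]
    rw [key p w, key p' w']
  rw [h3, h2] at h1
  linarith
end
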